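/- Let X be a compact topological space with a Radon measure μ and let B be a Banach space. Assume the continuous functions K : X² × B → B and L₁, L₂ : X → ℝ₊ satisfy ‖K(t,s,x) − K(t,s,y)‖ ≤ L₁(t)L₂(s)‖x − y‖ for all t,s ∈ X and x,y ∈ B, and ∫_X L₁(s)L₂(s) dμ(s) < 1. Then for every continuous f : X → B the nonlinear integral equation x(t) = f(t) + ∫_X K(t,s,x(s)) dμ(s) has a unique continuous solution x : X → B. -/

import Mathlib

open MeasureTheory Function

/-! Conjugating by multiplication with the weight `L₁` turns the operator
`x ↦ f + ∫ K(·, s, x s) dμ(s)` on `C(X, B)` into a contraction of the sup metric with constant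
`∫ L₁ L₂ dμ < 1`: this is the sup norm weighted by `1 / L₁`, in which
`‖K(t, s, x) − K(t, s, y)‖ / L₁ t ≤ L₁ s L₂ s · (‖x − y‖ / L₁ s)`. Banach's fixed point theorem
then gives exactly one continuous solution. -/

theorem ContractingWith.existsUnique_isFixedPt_of_conj {α β : Type*} [MetricSpace α]
    [Nonempty α] [CompleteSpace α] {K : NNReal} {T : β → β} (e : α ≃ β)
    (hS : ContractingWith K (e.symm ∘ T ∘ e)) : ∃! x, IsFixedPt T x := by
  have he : Semiconj e (e.symm ∘ T ∘ e) T := fun y => by simp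
  have he' : Semiconj e.symm T (e.symm ∘ T ∘ e) := fun x => by simp
  refine ⟨e (fixedPoint _ hS), hS.fixedPoint_isFixedPt.map he, fun x hx => ?_⟩
  rw [← hS.fixedPoint_unique (hx.map he'), e.apply_symm_apply]

theorem ContinuousMap.existsUnique_continuous_of_existsUnique {X Y : Type*} [TopologicalSpace X]
    [TopologicalSpace Y] {P : (X → Y) → Prop} (h : ∃! x : C(X, Y), P x) :
    ∃! x : X → Y, Continuous x ∧ P x := by
  obtain ⟨x, hx, huniq⟩ := h
  exact ⟨x, ⟨x.continuous, hx⟩, fun y ⟨hyc, hy⟩ => congrArg (⇑) (huniq ⟨y, hyc⟩ hy)⟩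

section CompactSpace

variable {X B : Type*} [TopologicalSpace X] [CompactSpace X] [MeasurableSpace X]
  [OpensMeasurableSpace X] {μ : Measure X} [IsFiniteMeasureOnCompacts μ] [NormedAddCommGroup B]

theorem Continuous.integrable_of_compactSpace {g : X → B} (hg : Continuous g) : Integrable g μ :=
  hg.integrable_of_hasCompactSupport (.of_compactSpace g)

variable [NormedSpace ℝ B]

theorem ContinuousMap.lipschitzWith_integral :
    LipschitzWith (measureUnivNNReal μ) fun g : C(X, B) => ∫ s, g s ∂μ := by
  refine LipschitzWith.of_dist_le_mul fun g h => ?_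
  rw [dist_eq_norm, ← integral_sub g.continuous.integrable_of_compactSpace
    h.continuous.integrable_of_compactSpace, mul_comm]
  exact norm_integral_le_of_norm_le_const (.of_forall fun s =>
    (dist_eq_norm (g s) (h s)).symm.trans_le (g.dist_apply_le_dist s))

theorem continuous_parametric_integral_of_compactSpace {Y : Type*} [TopologicalSpace Y]
    {G : Y → X → B} (hG : Continuous (uncurry G)) : Continuous fun y => ∫ s, G y s ∂μ :=
  ContinuousMap.lipschitzWith_integral.continuous.comp (ContinuousMap.curry ⟨_, hG⟩).continuous

variable (μ) in
noncomputable def urysohnOperator {K : X → X → B → B}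
    (hK : Continuous fun p : (X × X) × B => K p.1.1 p.1.2 p.2) (f x : C(X, B)) : C(X, B) where
  toFun t := f t + ∫ s, K t s (x s) ∂μ
  continuous_toFun := f.continuous.add <| continuous_parametric_integral_of_compactSpace <|
    hK.comp (f := fun p : X × X => ((p.1, p.2), x p.2)) (by fun_prop)

variable (μ) {K : X → X → B → B} (hK : Continuous fun p : (X × X) × B => K p.1.1 p.1.2 p.2)
  (f : C(X, B))

@[simp]
theorem urysohnOperator_apply (x : C(X, B)) (t : X) :
    urysohnOperator μ hK f x t = f t + ∫ s, K t s (x s) ∂μ :=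
  rfl

theorem isFixedPt_urysohnOperator_iff (x : C(X, B)) :
    IsFixedPt (urysohnOperator μ hK f) x ↔ ∀ t, x t = f t + ∫ s, K t s (x s) ∂μ := by
  rw [IsFixedPt, ContinuousMap.ext_iff]
  exact forall_congr' fun _ => eq_comm

variable {μ}

theorem norm_urysohnOperator_sub_le {L₁ L₂ : X → ℝ} (hL₂ : Continuous L₂)
    (hLip : ∀ t s x y, ‖K t s x - K t s y‖ ≤ L₁ t * L₂ s * ‖x - y‖) (x y : C(X, B)) (t : X) :
    ‖urysohnOperator μ hK f x t - urysohnOperator μ hK f y t‖ ≤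
      L₁ t * ∫ s, L₂ s * ‖x s - y s‖ ∂μ := by
  have hKx : Continuous fun s => K t s (x s) :=
    hK.comp (f := fun s => ((t, s), x s)) (by fun_prop)
  have hKy : Continuous fun s => K t s (y s) :=
    hK.comp (f := fun s => ((t, s), y s)) (by fun_prop)
  calc ‖urysohnOperator μ hK f x t - urysohnOperator μ hK f y t‖
      = ‖∫ s, K t s (x s) - K t s (y s) ∂μ‖ := by
        rw [urysohnOperator_apply, urysohnOperator_apply, add_sub_add_left_eq_sub,
          integral_sub hKx.integrable_of_compactSpace hKy.integrable_of_compactSpace]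
    _ ≤ ∫ s, ‖K t s (x s) - K t s (y s)‖ ∂μ := norm_integral_le_integral_norm _
    _ ≤ ∫ s, L₁ t * (L₂ s * ‖x s - y s‖) ∂μ :=
        integral_mono (hKx.sub hKy).norm.integrable_of_compactSpace
          (by fun_prop : Continuous _).integrable_of_compactSpace
          fun s => (hLip t s _ _).trans_eq (mul_assoc _ _ _)
    _ = L₁ t * ∫ s, L₂ s * ‖x s - y s‖ ∂μ := integral_const_mul _ _

theorem contractingWith_urysohnOperator_conj (w : C(X, ℝ)ˣ) (hw : ∀ t, 0 < (w : C(X, ℝ)) t)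
    {L : X → ℝ} (hL : Continuous L) (hL0 : ∀ s, 0 ≤ L s)
    (hLip : ∀ t s x y, ‖K t s x - K t s y‖ ≤ (w : C(X, ℝ)) t * L s * ‖x - y‖)
    (hr : ∫ s, (w : C(X, ℝ)) s * L s ∂μ < 1) :
    ContractingWith (∫ s, (w : C(X, ℝ)) s * L s ∂μ).toNNReal
      ((MulAction.toPerm w).symm ∘ urysohnOperator μ hK f ∘ MulAction.toPerm w) := by
  set r := ∫ s, (w : C(X, ℝ)) s * L s ∂μ
  have hr0 : 0 ≤ r := integral_nonneg fun s => mul_nonneg (hw s).le (hL0 s)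
  refine ⟨Real.toNNReal_lt_one.2 hr, LipschitzWith.of_dist_le_mul fun y₁ y₂ => ?_⟩
  rw [Real.coe_toNNReal _ hr0, ContinuousMap.dist_le (mul_nonneg hr0 dist_nonneg)]
  intro t
  set T := urysohnOperator μ hK f
  have hinv : (↑w⁻¹ : C(X, ℝ)) t = ((w : C(X, ℝ)) t)⁻¹ :=
    eq_inv_of_mul_eq_one_left (ContinuousMap.congr_fun w.inv_mul t)
  have hweight : ∀ s, ‖(w • y₁) s - (w • y₂) s‖ ≤ (w : C(X, ℝ)) s * dist y₁ y₂ := fun s => by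
    rw [Units.smul_def, Units.smul_def, ContinuousMap.smul_apply', ContinuousMap.smul_apply',
      ← smul_sub, norm_smul, Real.norm_of_nonneg (hw s).le, ← dist_eq_norm]
    exact mul_le_mul_of_nonneg_left (y₁.dist_apply_le_dist s) (hw s).le
  calc dist (((MulAction.toPerm w).symm ∘ T ∘ MulAction.toPerm w) y₁ t)
        (((MulAction.toPerm w).symm ∘ T ∘ MulAction.toPerm w) y₂ t)
      = ((w : C(X, ℝ)) t)⁻¹ * ‖T (w • y₁) t - T (w • y₂) t‖ := by
        simp only [comp_apply, MulAction.toPerm_apply, MulAction.toPerm_symm_apply,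
          Units.smul_def (w⁻¹), ContinuousMap.smul_apply', hinv, dist_eq_norm, ← smul_sub,
          norm_smul, Real.norm_of_nonneg (inv_nonneg.2 (hw t).le)]
    _ ≤ ((w : C(X, ℝ)) t)⁻¹ * ((w : C(X, ℝ)) t * ∫ s, L s * ‖(w • y₁) s - (w • y₂) s‖ ∂μ) := by
        gcongr
        · exact (inv_pos.2 (hw t)).le
        · exact norm_urysohnOperator_sub_le hK f hL hLip _ _ t
    _ = ∫ s, L s * ‖(w • y₁) s - (w • y₂) s‖ ∂μ := inv_mul_cancel_left₀ (hw t).ne' _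
    _ ≤ ∫ s, (w : C(X, ℝ)) s * L s * dist y₁ y₂ ∂μ := by
        refine integral_mono ?_ ?_ fun s => ?_
        · exact (hL.mul ((w • y₁ - w • y₂).continuous.norm)).integrable_of_compactSpace
        · exact (by fun_prop : Continuous _).integrable_of_compactSpace
        · calc L s * ‖(w • y₁) s - (w • y₂) s‖ ≤ L s * ((w : C(X, ℝ)) s * dist y₁ y₂) :=
                mul_le_mul_of_nonneg_left (hweight s) (hL0 s)
            _ = (w : C(X, ℝ)) s * L s * dist y₁ y₂ := by ring
    _ = r * dist y₁ y₂ := integral_mul_const _ _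

end CompactSpace

/-- Corollary of the Fredholm-type theorem with a product-form Lipschitz modulus: if the
continuous kernel `K : X² × B → B` satisfies `‖K(t,s,x) − K(t,s,y)‖ ≤ L₁(t)L₂(s)‖x − y‖`
with continuous `L₁, L₂ : X → ℝ₊` such that `∫_X L₁(s)L₂(s) dμ(s) < 1`, then for every
continuous `f : X → B` the equation `x(t) = f(t) + ∫_X K(t,s,x(s)) dμ(s)` has a unique
continuous solution. -/
theorem fredholm_type_unique_solution_product {X : Type*} [TopologicalSpace X] [CompactSpace X]
    [MeasurableSpace X] [BorelSpace X] (μ : Measure X) [μ.Regular]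
    {B : Type*} [NormedAddCommGroup B] [NormedSpace ℝ B] [CompleteSpace B]
    (K : X → X → B → B)
    (hK : Continuous (fun p : (X × X) × B => K p.1.1 p.1.2 p.2))
    (L₁ L₂ : X → ℝ) (hL₁cont : Continuous L₁) (hL₂cont : Continuous L₂)
    (hL₁pos : ∀ t : X, 0 < L₁ t) (hL₂pos : ∀ s : X, 0 < L₂ s)
    (hLip : ∀ t s : X, ∀ x y : B, ‖K t s x - K t s y‖ ≤ L₁ t * L₂ s * ‖x - y‖)
    (hint : (∫ s, L₁ s * L₂ s ∂μ) < 1)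
    (f : X → B) (hf : Continuous f) :
    ∃! x : X → B, Continuous x ∧ ∀ t : X, x t = f t + ∫ s, K t s (x s) ∂μ := by
  let w : C(X, ℝ)ˣ :=
    ((ContinuousMap.isUnit_iff_forall_ne_zero ⟨L₁, hL₁cont⟩).2 fun t => (hL₁pos t).ne').unit
  have hS := contractingWith_urysohnOperator_conj hK ⟨f, hf⟩ w hL₁pos hL₂cont
    (fun s => (hL₂pos s).le) hLip hint
  have hT := hS.existsUnique_isFixedPt_of_conj (MulAction.toPerm w)
  simp only [isFixedPt_urysohnOperator_iff] at hT
  exact ContinuousMap.existsUnique_continuous_of_existsUnique hT
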